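/- Let R be a two-dimensional regular local domain with maximal ideal M, residue characteristic p, and fraction field K; let π, δ ∈ M − M² with M = (π, δ). Let m be an integer prime to p, ρ a primitive m-th root of unity over K with monic minimal polynomial f(x) ∈ R[x], and R' = R[x]/(f(x)), so that R'/R is Galois with abelian group H. Choose (as is possible) the prime factorizations π = ∏_i π_i and δ = ∏_j δ_j in the UFD R' so that the sets {π_i} and {δ_j} each form a single H-orbit. Then: every maximal ideal of R' contains exactly one π_i and exactly one δ_j; the stabilizer H_M of a maximal ideal over M is contained in H_π ∩ H_δ, where H_π and H_δ are the stabilizers of a prime over (π) and over (δ); and for each pair (i,j), the ideal (π_i, δ_j)R' is either all of R' or is the intersection of a set of maximal ideals of R' forming a single H_π ∩ H_δ orbit, and this orbit is uniquely determined. -/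

import Mathlib

/-!
Write `R' = R[x]/(f)` and `H = Aut_R(R')`. Since `f` is separable modulo `M`, each maximal ideal
`N` of `R'` satisfies `M R'_N = N R'_N`, so the maximal ideal of `R'_N` is generated by `π` and
`δ`; since `R'` is free over `R`, going down gives `dim R'_N ≥ dim R = 2`. By Nakayama's lemma
neither `π` nor `δ` lies in `N²`, so `N` contains only one prime factor of each (two would put
their product in `N²`).

`H` is abelian, as it acts on the primitive root `ρ` by powers. Every element of `Gal(K(ρ)/K)`
restricts to `R'`, and an element of `R'` that is constant in `K(ρ)` is constant in `R'` (compare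
remainders modulo the monic `f`), so the `H`-invariants of `R'` are `R` and `H` acts transitively
on the maximal ideals. An automorphism moving `N` to `N'` moves the factor of `π` in `N` to an
associate of the one in `N'`; this, with commutativity and transitivity of `H` on the factors,
gives the stabilizer statements. Finally `(πᵢ, δⱼ)` contains `M R'`, which agrees locally with
every maximal ideal above it, so `(πᵢ, δⱼ)` is the intersection of those maximal ideals.
-/

open Polynomial IsLocalRing

theorem Ideal.IsPrime.existsUnique_mem_of_prod_mem_of_notMem_sq {S ι : Type*} [CommRing S]
    [Fintype ι] {P : Ideal S} (hP : P.IsPrime) {x : ι → S} (hmem : ∏ i, x i ∈ P)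
    (hsq : ∏ i, x i ∉ P ^ 2) : ∃! i, x i ∈ P := by
  classical
  obtain ⟨i, -, hi⟩ := hP.prod_mem_iff.mp hmem
  refine ⟨i, hi, fun j hj => by_contra fun hji => hsq ?_⟩
  rw [← Finset.mul_prod_erase _ _ (Finset.mem_univ j),
    ← Finset.mul_prod_erase _ _ (Finset.mem_erase.mpr ⟨Ne.symm hji, Finset.mem_univ i⟩),
    ← mul_assoc, pow_two]
  exact Ideal.mul_mem_right _ _ (Ideal.mul_mem_mul hj hi)

theorem IsLocalRing.maximalIdeal_eq_span_singleton_of_eq_span_pair {B : Type*} [CommRing B]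
    [IsLocalRing B] [IsNoetherianRing B] {u v : B} (h : maximalIdeal B = Ideal.span {u, v})
    (hu : u ∈ maximalIdeal B ^ 2) : maximalIdeal B = Ideal.span {v} := by
  refine le_antisymm ?_ ?_
  · refine Submodule.le_of_le_smul_of_le_jacobson_bot (IsNoetherian.noetherian _)
      (IsLocalRing.jacobson_eq_maximalIdeal ⊥ bot_ne_top).ge ?_
    calc maximalIdeal B = Ideal.span {v} ⊔ Ideal.span {u} := by
          rw [h, Ideal.span_insert, sup_comm]
      _ ≤ Ideal.span {v} ⊔ maximalIdeal B • maximalIdeal B := by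
          rw [smul_eq_mul, ← pow_two]
          exact sup_le_sup_left ((Ideal.span_singleton_le_iff_mem _).mpr hu) _
  · rw [h]
    exact Ideal.span_mono (by simp)

theorem IsLocalRing.notMem_maximalIdeal_sq_of_eq_span_pair {B : Type*} [CommRing B]
    [IsLocalRing B] [IsNoetherianRing B] (hdim : 2 ≤ ringKrullDim B) {u v : B}
    (h : maximalIdeal B = Ideal.span {u, v}) : u ∉ maximalIdeal B ^ 2 := by
  intro hu
  have hle := ringKrullDim_le_spanFinrank_maximalIdeal B
  rw [maximalIdeal_eq_span_singleton_of_eq_span_pair h hu] at hle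
  have h1 : (Ideal.span {v} : Ideal B).spanFinrank ≤ 1 := by
    simpa using Submodule.spanFinrank_span_le_ncard_of_finite (R := B) (Set.finite_singleton v)
  have := hdim.trans hle
  norm_cast at this
  omega

theorem Ideal.map_localization_eq_maximalIdeal_of_exists_notMem_mul_mem {S : Type*} [CommRing S]
    {N J : Ideal S} [N.IsPrime] (hJN : J ≤ N) (h : ∀ x ∈ N, ∃ s ∉ N, s * x ∈ J) :
    J.map (algebraMap S (Localization.AtPrime N)) = maximalIdeal (Localization.AtPrime N) := by
  rw [← Localization.AtPrime.map_eq_maximalIdeal]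
  refine le_antisymm (Ideal.map_mono hJN) (Ideal.map_le_iff_le_comap.mpr fun x hx => ?_)
  obtain ⟨s, hs, hsx⟩ := h x hx
  obtain ⟨t, ht⟩ :=
    (IsLocalization.map_units (Localization.AtPrime N) (⟨s, hs⟩ : N.primeCompl)).exists_left_inv
  rw [Ideal.mem_comap, ← one_mul (algebraMap S _ x), ← ht, mul_assoc, ← map_mul]
  exact Ideal.mul_mem_left _ _ (Ideal.mem_map_of_mem _ hsx)

theorem algebraMap_notMem_sq_of_span_pair_eq_maximalIdeal {R S : Type*} [CommRing R] [IsLocalRing R]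
    [IsNoetherianRing R] [CommRing S] [IsNoetherianRing S] [Algebra R S] [Algebra.HasGoingDown R S]
    (hdim : 2 ≤ ringKrullDim R) {π δ : R} (hparams : Ideal.span {π, δ} = maximalIdeal R)
    (N : Ideal S) [N.IsPrime] [N.LiesOver (maximalIdeal R)]
    (hunram : ∀ x ∈ N, ∃ s ∉ N, s * x ∈ (maximalIdeal R).map (algebraMap R S)) :
    algebraMap R S π ∉ N ^ 2 := by
  let B := Localization.AtPrime N
  have hdimB : 2 ≤ ringKrullDim B := by
    rw [IsLocalization.AtPrime.ringKrullDim_eq_height N B,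
      Ideal.height_eq_height_add_of_liesOver_of_hasGoingDown (maximalIdeal R) N]
    refine hdim.trans ?_
    rw [← maximalIdeal_height_eq_ringKrullDim]
    exact_mod_cast le_self_add
  have hJN : (maximalIdeal R).map (algebraMap R S) ≤ N :=
    Ideal.map_le_iff_le_comap.mpr (Ideal.LiesOver.over (P := N)).le
  have hmax : maximalIdeal B = Ideal.span {algebraMap R B π, algebraMap R B δ} := by
    rw [← Ideal.map_localization_eq_maximalIdeal_of_exists_notMem_mul_mem hJN hunram, ← hparams,
      Ideal.map_map, ← IsScalarTower.algebraMap_eq, Ideal.map_span, Set.image_pair]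
  intro hπ
  refine notMem_maximalIdeal_sq_of_eq_span_pair hdimB hmax ?_
  rw [← Localization.AtPrime.map_eq_maximalIdeal, ← Ideal.map_pow,
    IsScalarTower.algebraMap_apply R S B]
  exact Ideal.mem_map_of_mem _ hπ

theorem Ideal.map_span_pair_le_span_pair {R S : Type*} [CommRing R] [CommRing S] [Algebra R S]
    {a b : R} {x y : S} (ha : x ∣ algebraMap R S a) (hb : y ∣ algebraMap R S b) :
    (Ideal.span {a, b}).map (algebraMap R S) ≤ Ideal.span {x, y} := by
  rw [Ideal.map_span, Set.image_pair, Ideal.span_le]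
  rintro _ (rfl | rfl)
  exacts [Ideal.mem_of_dvd _ ha (Ideal.subset_span (by simp)),
    Ideal.mem_of_dvd _ hb (Ideal.subset_span (by simp))]

theorem Ideal.jacobson_eq_self_of_le {S : Type*} [CommRing S] {J I : Ideal S}
    (hJ : ∀ N : Ideal S, N.IsMaximal → J ≤ N → ∀ x ∈ N, ∃ s ∉ N, s * x ∈ J) (hJI : J ≤ I) :
    I.jacobson = I := by
  refine le_antisymm (fun x hx => by_contra fun hxI => ?_) Ideal.le_jacobson
  have hne : I.colon {x} ≠ ⊤ := fun htop => by
    have h1 : (1 : S) ∈ I.colon {x} := htop ▸ Submodule.mem_top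
    exact hxI (by simpa using Submodule.mem_colon_singleton.mp h1)
  obtain ⟨N, hN, hcolon⟩ := Ideal.exists_le_maximal _ hne
  obtain ⟨s, hsN, hsx⟩ : ∃ s ∉ N, s * x ∈ I := by
    by_cases hIN : I ≤ N
    · obtain ⟨s, hsN, hsx⟩ := hJ N hN (hJI.trans hIN) x (Ideal.mem_sInf.mp hx ⟨hIN, hN⟩)
      exact ⟨s, hsN, hJI hsx⟩
    · obtain ⟨s, hsI, hsN⟩ := SetLike.not_le_iff_exists.mp hIN
      exact ⟨s, hsN, I.mul_mem_right x hsI⟩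
  exact hsN (hcolon (Submodule.mem_colon_singleton.mpr hsx))

theorem Polynomial.exists_notMem_mul_eq_zero_of_squarefree {k : Type*} [Field k] {g : k[X]}
    (hg : Squarefree g) {P : Ideal (k[X] ⧸ Ideal.span {g})} (hP : P.IsPrime)
    {x : k[X] ⧸ Ideal.span {g}} (hx : x ∈ P) : ∃ s ∉ P, s * x = 0 := by
  set Q := P.comap (Ideal.Quotient.mk (Ideal.span {g}))
  have hgQ : g ∈ Q := by
    simp [Q, Ideal.Quotient.eq_zero_iff_mem.mpr (Ideal.mem_span_singleton_self g)]
  obtain ⟨h, hQh⟩ : ∃ h, Q = Ideal.span {h} := (IsPrincipalIdealRing.principal Q).principal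
  obtain ⟨c, rfl⟩ : h ∣ g := Ideal.mem_span_singleton.mp (hQh ▸ hgQ)
  have hprime : Prime h := by
    refine (Ideal.span_singleton_prime ?_).mp (hQh ▸ hP.comap _)
    rintro rfl
    exact hg.ne_zero (zero_mul c)
  obtain ⟨y, rfl⟩ := Ideal.Quotient.mk_surjective x
  obtain ⟨d, rfl⟩ : h ∣ y := Ideal.mem_span_singleton.mp (hQh ▸ (show y ∈ Q from hx))
  refine ⟨Ideal.Quotient.mk _ c, fun hc => ?_, ?_⟩
  · obtain ⟨e, rfl⟩ := Ideal.mem_span_singleton.mp (hQh ▸ (show c ∈ Q from hc))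
    exact hprime.not_isUnit (hg h ⟨e, by ring⟩)
  · rw [← map_mul, Ideal.Quotient.eq_zero_iff_mem, Ideal.mem_span_singleton]
    exact ⟨d, by ring⟩

section Factors

variable {R S : Type*} [CommRing R] [CommRing S] [Algebra R S] {ι : Type*} {ws : ι → S}

theorem exists_associated_algEquiv_apply [IsDomain S] [Fintype ι] {x : R}
    (hfac : algebraMap R S x = ∏ i, ws i) (hprime : ∀ i, Prime (ws i)) (σ : S ≃ₐ[R] S) (i : ι) :
    ∃ j, Associated (σ (ws i)) (ws j) := by
  have hσi : Prime (σ (ws i)) := (MulEquiv.prime_iff σ).mpr (hprime i)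
  have hdvd : σ (ws i) ∣ ∏ j, ws j := by
    rw [← hfac, ← σ.commutes x, hfac]
    exact map_dvd σ (Finset.dvd_prod_of_mem ws (Finset.mem_univ i))
  obtain ⟨j, -, hj⟩ := hσi.exists_mem_finset_dvd hdvd
  exact ⟨j, hσi.associated_of_dvd (hprime j) hj⟩

theorem mem_map_iff_map_span_singleton_eq [IsDomain S] {σ : S ≃ₐ[R] S} {i : ι}
    (hperm : ∃ j, Associated (σ (ws i)) (ws j)) {N : Ideal S} (hi : ws i ∈ N)
    (huniq : ∃! j, ws j ∈ N.map σ) :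
    ws i ∈ N.map σ ↔ (Ideal.span {ws i}).map σ = Ideal.span {ws i} := by
  rw [Ideal.map_span, Set.image_singleton]
  constructor
  · intro hiσ
    obtain ⟨j, hj⟩ := hperm
    have hjσ : ws j ∈ N.map σ := (Ideal.mem_of_dvd _ hj.dvd (Ideal.mem_map_of_mem σ hi))
    rw [huniq.unique hjσ hiσ] at hj
    exact Ideal.span_singleton_eq_span_singleton.mpr hj
  · intro h
    have : ws i ∈ Ideal.span {σ (ws i)} := h ▸ Ideal.mem_span_singleton_self _
    exact Ideal.span_le.mpr (by simpa using Ideal.mem_map_of_mem σ hi) this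

theorem map_span_singleton_eq_of_commute {σ : S ≃ₐ[R] S}
    (hcomm : ∀ τ : S ≃ₐ[R] S, ∀ y, σ (τ y) = τ (σ y))
    (horb : ∀ i j, ∃ τ : S ≃ₐ[R] S, τ (ws i) = ws j) {i : ι}
    (hi : (Ideal.span {ws i}).map σ = Ideal.span {ws i}) (j : ι) :
    (Ideal.span {ws j}).map σ = Ideal.span {ws j} := by
  obtain ⟨τ, hτ⟩ := horb i j
  have hmap (e : S ≃ₐ[R] S) (y : S) : (Ideal.span {y}).map e = Ideal.span {e y} := by
    rw [Ideal.map_span, Set.image_singleton]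
  rw [← hτ]
  calc (Ideal.span {τ (ws i)}).map σ = ((Ideal.span {ws i}).map σ).map τ := by
        rw [hmap, hmap, hmap, hcomm]
    _ = Ideal.span {τ (ws i)} := by rw [hi, hmap]

theorem map_span_singleton_eq_of_map_eq [IsDomain S] {σ : S ≃ₐ[R] S}
    (hcomm : ∀ τ : S ≃ₐ[R] S, ∀ y, σ (τ y) = τ (σ y))
    (horb : ∀ i j, ∃ τ : S ≃ₐ[R] S, τ (ws i) = ws j)
    (hperm : ∀ i, ∃ j, Associated (σ (ws i)) (ws j)) {N : Ideal S} (huniq : ∃! j, ws j ∈ N)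
    (hN : N.map σ = N) (j : ι) : (Ideal.span {ws j}).map σ = Ideal.span {ws j} := by
  obtain ⟨i, hi⟩ := huniq.exists
  refine map_span_singleton_eq_of_commute hcomm horb (i := i) ?_ j
  exact (mem_map_iff_map_span_singleton_eq (hperm i) hi (by rwa [hN])).mp (by rwa [hN])

theorem setOf_isMaximal_span_pair_le_eq [IsDomain S] {κ : Type*} {vs : κ → S}
    (htrans : ∀ N N' : Ideal S, N.IsMaximal → N'.IsMaximal → ∃ σ : S ≃ₐ[R] S, N' = N.map σ)
    (hwuniq : ∀ N : Ideal S, N.IsMaximal → ∃! i, ws i ∈ N)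
    (hvuniq : ∀ N : Ideal S, N.IsMaximal → ∃! j, vs j ∈ N)
    (hwperm : ∀ (σ : S ≃ₐ[R] S) i, ∃ i', Associated (σ (ws i)) (ws i'))
    (hvperm : ∀ (σ : S ≃ₐ[R] S) j, ∃ j', Associated (σ (vs j)) (vs j'))
    {i : ι} {j : κ} {M₀ : Ideal S} (hM₀ : M₀.IsMaximal) (hle : Ideal.span {ws i, vs j} ≤ M₀) :
    {M : Ideal S | M.IsMaximal ∧ Ideal.span {ws i, vs j} ≤ M} =
      {M | ∃ σ : S ≃ₐ[R] S, (Ideal.span {ws i}).map σ = Ideal.span {ws i} ∧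
        (Ideal.span {vs j}).map σ = Ideal.span {vs j} ∧ M = M₀.map σ} := by
  have hi : ws i ∈ M₀ := hle (Ideal.subset_span (by simp))
  have hj : vs j ∈ M₀ := hle (Ideal.subset_span (by simp))
  have hwσ (σ : S ≃ₐ[R] S) := mem_map_iff_map_span_singleton_eq (hwperm σ i) hi
    (hwuniq _ (Ideal.map_isMaximal_of_equiv σ))
  have hvσ (σ : S ≃ₐ[R] S) := mem_map_iff_map_span_singleton_eq (hvperm σ j) hj
    (hvuniq _ (Ideal.map_isMaximal_of_equiv σ))
  ext M
  constructor
  · rintro ⟨hM, hMle⟩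
    obtain ⟨σ, rfl⟩ := htrans M₀ M hM₀ hM
    exact ⟨σ, (hwσ σ).mp (hMle (Ideal.subset_span (by simp))),
      (hvσ σ).mp (hMle (Ideal.subset_span (by simp))), rfl⟩
  · rintro ⟨σ, hσw, hσv, rfl⟩
    refine ⟨Ideal.map_isMaximal_of_equiv σ, Ideal.span_le.mpr ?_⟩
    rintro _ (rfl | rfl)
    exacts [(hwσ σ).mpr hσw, (hvσ σ).mpr hσv]

end Factors

namespace AdjoinRoot

section MapAlgebraMap

variable {R : Type*} (S : Type*) [CommRing R] [CommRing S] [Algebra R S] (f : R[X])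

noncomputable def mapAlgebraMap : AdjoinRoot f →ₐ[R] AdjoinRoot (f.map (algebraMap R S)) where
  __ := map (algebraMap R S) f _ dvd_rfl
  commutes' r := by simp [algebraMap_eq']

@[simp]
theorem mapAlgebraMap_root : mapAlgebraMap S f (root f) = root (f.map (algebraMap R S)) :=
  map_root _ _ _ dvd_rfl

theorem mapAlgebraMap_mk (g : R[X]) :
    mapAlgebraMap S f (mk f g) = mk _ (g.map (algebraMap R S)) := by
  have : (map (algebraMap R S) f _ dvd_rfl).comp (mk f) =
      (mk _).comp (mapRingHom (algebraMap R S)) := by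
    ext <;> simp [mk_X]
  exact RingHom.congr_fun this g

variable {S f} in
theorem mapAlgebraMap_injective (hS : Function.Injective (algebraMap R S)) (hf : f.Monic) :
    Function.Injective (mapAlgebraMap S f) := by
  refine (injective_iff_map_eq_zero _).mpr fun z hz => ?_
  obtain ⟨g, rfl⟩ := mk_surjective z
  rwa [mapAlgebraMap_mk, mk_eq_zero, map_dvd_map _ hS hf, ← mk_eq_zero] at hz

end MapAlgebraMap

theorem finite_algEquiv {R : Type*} [CommRing R] {f : R[X]} [IsDomain (AdjoinRoot f)]
    (hf : f.Monic) : Finite (AdjoinRoot f ≃ₐ[R] AdjoinRoot f) := by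
  have hroot (σ : AdjoinRoot f ≃ₐ[R] AdjoinRoot f) : σ (root f) ∈ f.rootSet (AdjoinRoot f) :=
    mem_rootSet'.mpr ⟨(hf.map _).ne_zero, aeval_algHom_eq_zero f σ.toAlgHom⟩
  have := (f.rootSet_finite (AdjoinRoot f)).to_subtype
  refine Finite.of_injective (fun σ => (⟨σ (root f), hroot σ⟩ : f.rootSet (AdjoinRoot f)))
    fun σ τ h => ?_
  exact AlgEquiv.coe_toAlgHom_injective (algHom_ext (congrArg Subtype.val h))

theorem algEquiv_commute {R : Type*} [CommRing R] {f : R[X]} [IsDomain (AdjoinRoot f)]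
    {m : ℕ} [NeZero m] (hroot : IsPrimitiveRoot (root f) m) (σ τ : AdjoinRoot f ≃ₐ[R] AdjoinRoot f)
    (x : AdjoinRoot f) : σ (τ x) = τ (σ x) := by
  have hpow (σ : AdjoinRoot f ≃ₐ[R] AdjoinRoot f) : ∃ i, root f ^ i = σ (root f) :=
    let ⟨i, _, hi⟩ := hroot.eq_pow_of_pow_eq_one (by rw [← map_pow, hroot.pow_eq_one, map_one])
    ⟨i, hi⟩
  obtain ⟨i, hi⟩ := hpow σ
  obtain ⟨j, hj⟩ := hpow τ
  have : σ.toAlgHom.comp τ.toAlgHom = τ.toAlgHom.comp σ.toAlgHom := algHom_ext <| by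
    change σ (τ (root f)) = τ (σ (root f))
    rw [← hi, ← hj, map_pow, map_pow, ← hi, ← hj, ← pow_mul, ← pow_mul, mul_comm]
  exact AlgHom.congr_fun this x

theorem isCyclotomicExtension {A : Type*} [CommRing A] {g : A[X]} {m : ℕ} [NeZero m]
    (h : IsPrimitiveRoot (root g) m) : IsCyclotomicExtension {m} A (AdjoinRoot g) :=
  (IsCyclotomicExtension.iff_singleton m A _).mpr ⟨⟨_, h⟩, fun _ =>
    Algebra.adjoin_mono (by simpa using h.pow_eq_one)
      (adjoinRoot_eq_top (f := g) ▸ Algebra.mem_top)⟩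

section FractionField

variable {R K : Type*} [CommRing R] [Field K] [Algebra R K] [IsFractionRing R K] {f : R[X]}

local notation "L" => AdjoinRoot (f.map (algebraMap R K))

theorem isDomain_of_irreducible_map (hf : f.Monic) (hirr : Irreducible (f.map (algebraMap R K))) :
    IsDomain (AdjoinRoot f) :=
  have : Fact (Irreducible (f.map (algebraMap R K))) := ⟨hirr⟩
  (mapAlgebraMap_injective (IsFractionRing.injective R K) hf).isDomain
    (mapAlgebraMap K f : AdjoinRoot f →+* L)

theorem mem_range_of_mapAlgebraMap_mem_range (hf : f.Monic)
    (hirr : Irreducible (f.map (algebraMap R K))) {z : AdjoinRoot f}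
    (hz : mapAlgebraMap K f z ∈ Set.range (algebraMap K L)) :
    z ∈ Set.range (algebraMap R (AdjoinRoot f)) := by
  have hinj := IsFractionRing.injective R K
  have := (algebraMap R K).domain_nontrivial
  obtain ⟨c, hc⟩ := hz
  obtain ⟨g, rfl⟩ := mk_surjective z
  rw [← mk_leftInverse hf (mk f g), modByMonicHom_mk] at hc ⊢
  set r := g %ₘ f
  -- `r ≡ c` modulo `f` over `K` and `deg r < deg f`, so `r` is the constant `c`.
  have hdvd : f.map (algebraMap R K) ∣ r.map (algebraMap R K) - C c := by
    rw [← mk_eq_mk, mk_C, ← mapAlgebraMap_mk, ← hc]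
    rfl
  have hdeg : (r.map (algebraMap R K) - C c).degree < (f.map (algebraMap R K)).degree := by
    refine (degree_sub_le _ _).trans_lt
      (max_lt ?_ (degree_C_le.trans_lt (degree_pos_of_irreducible hirr)))
    rw [degree_map_eq_of_injective hinj, degree_map_eq_of_injective hinj]
    exact degree_modByMonic_lt g hf
  have hr : r.natDegree = 0 := by
    rw [← natDegree_map_eq_of_injective hinj,
      sub_eq_zero.mp (eq_zero_of_dvd_of_degree_lt hdvd hdeg), natDegree_C]
  refine ⟨r.coeff 0, ?_⟩
  conv_rhs => rw [eq_C_of_natDegree_eq_zero hr]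
  exact (mk_C _).symm

variable {m : ℕ} [NeZero m] (hf : f.Monic) (hroot : IsPrimitiveRoot (root f) m)
include hf hroot

theorem exists_mapAlgebraMap_comp_eq [Fact (Irreducible (f.map (algebraMap R K)))]
    (τ : L →ₐ[K] L) : ∃ σ : AdjoinRoot f →ₐ[R] AdjoinRoot f,
      (mapAlgebraMap K f).comp σ = (τ.restrictScalars R).comp (mapAlgebraMap K f) := by
  have hinj := mapAlgebraMap_injective (IsFractionRing.injective R K) hf
  have hρ := hroot.map_of_injective hinj
  obtain ⟨i, -, hi⟩ := hρ.eq_pow_of_pow_eq_one (ξ := τ (mapAlgebraMap K f (root f)))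
    (by rw [← map_pow, hρ.pow_eq_one, map_one])
  have haeval : aeval (root f ^ i) f = 0 := hinj <| by
    have h0 : aeval (root f) f = 0 := by rw [aeval_eq, mk_self]
    rw [map_zero, ← aeval_algHom_apply, map_pow, hi,
      ← AlgHom.restrictScalars_apply R τ (mapAlgebraMap K f (root f)), aeval_algHom_apply,
      aeval_algHom_apply, h0, map_zero, map_zero]
  refine ⟨liftAlgHom f (Algebra.ofId R _) (root f ^ i) haeval, algHom_ext ?_⟩
  simp only [AlgHom.comp_apply, AlgHom.restrictScalars_apply, ← hi, ← map_pow]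
  exact congrArg _ (liftAlgHom_root ..)

theorem exists_mapAlgebraMap_algEquiv_apply [Fact (Irreducible (f.map (algebraMap R K)))]
    (τ : L ≃ₐ[K] L) : ∃ σ : AdjoinRoot f ≃ₐ[R] AdjoinRoot f,
      ∀ z, mapAlgebraMap K f (σ z) = τ (mapAlgebraMap K f z) := by
  have hinj := mapAlgebraMap_injective (IsFractionRing.injective R K) hf
  obtain ⟨σ, hσ⟩ := exists_mapAlgebraMap_comp_eq hf hroot τ.toAlgHom
  obtain ⟨σ', hσ'⟩ := exists_mapAlgebraMap_comp_eq hf hroot τ.symm.toAlgHom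
  have hσ z : mapAlgebraMap K f (σ z) = τ (mapAlgebraMap K f z) := AlgHom.congr_fun hσ z
  have hσ' z : mapAlgebraMap K f (σ' z) = τ.symm (mapAlgebraMap K f z) := AlgHom.congr_fun hσ' z
  refine ⟨AlgEquiv.ofAlgHom σ σ' ?_ ?_, hσ⟩ <;>
    exact AlgHom.ext fun z => hinj (by simp [hσ, hσ'])

theorem isInvariant (hirr : Irreducible (f.map (algebraMap R K))) :
    Algebra.IsInvariant R (AdjoinRoot f) (AdjoinRoot f ≃ₐ[R] AdjoinRoot f) := by
  have : Fact (Irreducible (f.map (algebraMap R K))) := ⟨hirr⟩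
  have : IsCyclotomicExtension {m} K L := isCyclotomicExtension <| by
    simpa using hroot.map_of_injective (mapAlgebraMap_injective (IsFractionRing.injective R K) hf)
  have := IsCyclotomicExtension.finiteDimensional {m} K L
  have := IsCyclotomicExtension.isGalois {m} K L
  refine ⟨fun z hz => mem_range_of_mapAlgebraMap_mem_range hf hirr <|
    (IsGalois.mem_range_algebraMap_iff_fixed _).mpr fun τ => ?_⟩
  obtain ⟨σ, hσ⟩ := exists_mapAlgebraMap_algEquiv_apply hf hroot τ
  rw [← hσ, ← AlgEquiv.smul_def, hz σ]

end FractionField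

section LocalBase

variable {R : Type*} [CommRing R] [IsLocalRing R] {f : R[X]}

theorem exists_notMem_mul_mem_map_maximalIdeal (hsep : (f.map (residue R)).Separable)
    {N : Ideal (AdjoinRoot f)} (hN : N.IsPrime)
    (hMN : (maximalIdeal R).map (algebraMap R (AdjoinRoot f)) ≤ N) {x : AdjoinRoot f}
    (hx : x ∈ N) :
    ∃ s ∉ N, s * x ∈ (maximalIdeal R).map (algebraMap R (AdjoinRoot f)) := by
  set J := (maximalIdeal R).map (algebraMap R (AdjoinRoot f))
  let e : (AdjoinRoot f ⧸ J) ≃ₐ[R] (ResidueField R)[X] ⧸ Ideal.span {f.map (residue R)} :=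
    quotEquivQuotMap f (maximalIdeal R)
  have hmem (y : AdjoinRoot f) : Ideal.Quotient.mk J y ∈ N.map (Ideal.Quotient.mk J) ↔ y ∈ N :=
    Ideal.mem_quotient_iff_mem hMN
  have hNJ : (N.map (Ideal.Quotient.mk J)).IsPrime :=
    Ideal.map_isPrime_of_surjective Ideal.Quotient.mk_surjective (by rwa [Ideal.mk_ker])
  obtain ⟨t, ht, htx⟩ := Polynomial.exists_notMem_mul_eq_zero_of_squarefree hsep.squarefree
    (hNJ.comap e.symm) (x := e (Ideal.Quotient.mk J x)) (by simpa [hmem] using hx)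
  obtain ⟨s, hs⟩ := Ideal.Quotient.mk_surjective (e.symm t)
  refine ⟨s, fun hsN => ht ?_, ?_⟩
  · simpa [Ideal.mem_comap, ← hs, hmem] using hsN
  · rw [← Ideal.Quotient.eq_zero_iff_mem, map_mul, hs,
      ← e.symm_apply_apply (Ideal.Quotient.mk J x), ← map_mul, htx, map_zero]

theorem liesOver_maximalIdeal (hf : f.Monic) (N : Ideal (AdjoinRoot f)) [N.IsMaximal] :
    N.LiesOver (maximalIdeal R) :=
  have := hf.finite_adjoinRoot
  ⟨(eq_maximalIdeal (Ideal.IsMaximal.under R N)).symm⟩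

theorem existsUnique_mem_of_algebraMap_eq_prod [IsNoetherianRing R] (hf : f.Monic)
    (hsep : (f.map (residue R)).Separable) (hdim : 2 ≤ ringKrullDim R) {π δ : R}
    (hparams : Ideal.span {π, δ} = maximalIdeal R) {ι : Type*} [Fintype ι]
    {ws : ι → AdjoinRoot f} (hfac : algebraMap R (AdjoinRoot f) π = ∏ i, ws i)
    (N : Ideal (AdjoinRoot f)) (hN : N.IsMaximal) : ∃! i, ws i ∈ N := by
  have := hf.free_adjoinRoot
  have := liesOver_maximalIdeal hf N
  have hMN : (maximalIdeal R).map (algebraMap R (AdjoinRoot f)) ≤ N :=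
    Ideal.map_le_iff_le_comap.mpr (Ideal.LiesOver.over (p := maximalIdeal R) (P := N)).le
  have hπN : algebraMap R (AdjoinRoot f) π ∈ N :=
    hMN (Ideal.mem_map_of_mem _ (hparams ▸ Ideal.subset_span (by simp)))
  rw [hfac] at hπN
  refine hN.isPrime.existsUnique_mem_of_prod_mem_of_notMem_sq hπN (hfac ▸ ?_)
  exact algebraMap_notMem_sq_of_span_pair_eq_maximalIdeal hdim hparams N
    fun _ hx => exists_notMem_mul_mem_map_maximalIdeal hsep hN.isPrime hMN hx

theorem exists_algEquiv_map_eq [IsDomain (AdjoinRoot f)]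
    [Algebra.IsInvariant R (AdjoinRoot f) (AdjoinRoot f ≃ₐ[R] AdjoinRoot f)] (hf : f.Monic)
    (N N' : Ideal (AdjoinRoot f)) (hN : N.IsMaximal) (hN' : N'.IsMaximal) :
    ∃ σ : AdjoinRoot f ≃ₐ[R] AdjoinRoot f, N' = N.map σ := by
  have := finite_algEquiv hf
  have := liesOver_maximalIdeal hf N
  have := liesOver_maximalIdeal hf N'
  exact Algebra.IsInvariant.exists_smul_of_under_eq R _ _ N N'
    ((Ideal.LiesOver.over (p := maximalIdeal R) (P := N)).symm.trans Ideal.LiesOver.over)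

end LocalBase

end AdjoinRoot

theorem adjoin_root_of_unity_over_2dim_regular_local_general
    (R : Type) [CommRing R] [IsLocalRing R] [IsNoetherianRing R]
    (hdim : ringKrullDim R = 2)
    (π δ : R) (hparams : Ideal.span {π, δ} = maximalIdeal R)
    (K : Type) [Field K] [Algebra R K] [IsFractionRing R K]
    (m : ℕ) (hm0 : 0 < m)
    -- `f` is the (monic) minimal polynomial over `K` of a primitive `m`-th root of unity,
    -- with coefficients in `R`, and `R' = R[x]/(f)` is étale over `R`
    (f : Polynomial R) (hmonic : f.Monic)
    (hirr : Irreducible (f.map (algebraMap R K)))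
    (hroot : IsPrimitiveRoot (AdjoinRoot.root f) m)
    (hsep : (f.map (residue R)).Separable)
    -- prime factorizations of `π` and `δ` in `R'`, each a single `H`-orbit
    (ι κ : Type) [Fintype ι] [Fintype κ]
    (πs : ι → AdjoinRoot f) (δs : κ → AdjoinRoot f)
    (hπfac : algebraMap R (AdjoinRoot f) π = ∏ i, πs i)
    (hδfac : algebraMap R (AdjoinRoot f) δ = ∏ j, δs j)
    (hπprime : ∀ i, Prime (πs i)) (hδprime : ∀ j, Prime (δs j))
    (hπorb : ∀ i i', ∃ h : AdjoinRoot f ≃ₐ[R] AdjoinRoot f, h (πs i) = πs i')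
    (hδorb : ∀ j j', ∃ h : AdjoinRoot f ≃ₐ[R] AdjoinRoot f, h (δs j) = δs j') :
    -- every maximal ideal of `R'` contains exactly one `πᵢ` and one `δⱼ`
    (∀ M : Ideal (AdjoinRoot f), M.IsMaximal → (∃! i, πs i ∈ M) ∧ (∃! j, δs j ∈ M)) ∧
    -- `H_M ⊆ H_π ∩ H_δ`
    (∀ M : Ideal (AdjoinRoot f), M.IsMaximal →
      ∀ h : AdjoinRoot f ≃ₐ[R] AdjoinRoot f, Ideal.map h M = M →
        (∀ i, Ideal.map h (Ideal.span {πs i}) = Ideal.span {πs i}) ∧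
        (∀ j, Ideal.map h (Ideal.span {δs j}) = Ideal.span {δs j})) ∧
    -- `(πᵢ, δⱼ)R'` is `R'` or the intersection of the maximal ideals containing it, which
    -- form a single (uniquely determined) `H_π ∩ H_δ` orbit
    (∀ i j, Ideal.span {πs i, δs j} = ⊤ ∨
      (Ideal.span {πs i, δs j}
          = sInf {M : Ideal (AdjoinRoot f) | M.IsMaximal ∧ Ideal.span {πs i, δs j} ≤ M} ∧
        ∃ M₀ : Ideal (AdjoinRoot f), M₀.IsMaximal ∧ Ideal.span {πs i, δs j} ≤ M₀ ∧
          {M : Ideal (AdjoinRoot f) | M.IsMaximal ∧ Ideal.span {πs i, δs j} ≤ M}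
            = {M | ∃ h : AdjoinRoot f ≃ₐ[R] AdjoinRoot f,
                Ideal.map h (Ideal.span {πs i}) = Ideal.span {πs i} ∧
                Ideal.map h (Ideal.span {δs j}) = Ideal.span {δs j} ∧
                M = Ideal.map h M₀})) := by
  have : NeZero m := ⟨hm0.ne'⟩
  have := AdjoinRoot.isDomain_of_irreducible_map hmonic hirr
  have := AdjoinRoot.isInvariant hmonic hroot hirr
  have hπ := AdjoinRoot.existsUnique_mem_of_algebraMap_eq_prod hmonic hsep hdim.ge hparams hπfac
  have hδ := AdjoinRoot.existsUnique_mem_of_algebraMap_eq_prod hmonic hsep hdim.ge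
    (Ideal.span_pair_comm.trans hparams) hδfac
  have hπperm := exists_associated_algEquiv_apply hπfac hπprime
  have hδperm := exists_associated_algEquiv_apply hδfac hδprime
  have hcomm := AdjoinRoot.algEquiv_commute hroot
  refine ⟨fun N hN => ⟨hπ N hN, hδ N hN⟩, fun N hN σ hσ =>
    ⟨map_span_singleton_eq_of_map_eq (hcomm σ) hπorb (hπperm σ) (hπ N hN) hσ,
      map_span_singleton_eq_of_map_eq (hcomm σ) hδorb (hδperm σ) (hδ N hN) hσ⟩, fun i j => ?_⟩
  refine or_iff_not_imp_left.mpr fun htop => ?_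
  obtain ⟨M₀, hM₀, hle⟩ := Ideal.exists_le_maximal _ htop
  have hJ : (maximalIdeal R).map (algebraMap R (AdjoinRoot f)) ≤ Ideal.span {πs i, δs j} :=
    hparams ▸ Ideal.map_span_pair_le_span_pair
      (hπfac ▸ Finset.dvd_prod_of_mem _ (Finset.mem_univ i))
      (hδfac ▸ Finset.dvd_prod_of_mem _ (Finset.mem_univ j))
  have hjac := Ideal.jacobson_eq_self_of_le (fun N hN hJN _ hx =>
    AdjoinRoot.exists_notMem_mul_mem_map_maximalIdeal hsep hN.isPrime hJN hx) hJ
  refine ⟨hjac.symm.trans (by simp only [Ideal.jacobson, and_comm]), M₀, hM₀, hle,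
    setOf_isMaximal_span_pair_le_eq (AdjoinRoot.exists_algEquiv_map_eq hmonic) hπ hδ hπperm hδperm
      hM₀ hle⟩

set_option synthInstance.maxHeartbeats 400000 in
set_option maxHeartbeats 1000000 in
set_option linter.unusedVariables false in
/-- Lemmas 3.1/3.2 of Saltman, "Cyclic algebras over p-adic curves".
Let `R` be a two-dimensional regular local domain with maximal ideal `M = (π, δ)`
(`π, δ ∈ M − M²`), residue characteristic `p`, and fraction field `K`.  Let `m` be prime to
`p`, let `ρ` be a primitive `m`-th root of unity over `K` with monic minimal polynomial
`f ∈ R[x]`, and let `R' = R[x]/(f)` (modelled by `AdjoinRoot f`; `R'/R` is Galois with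
abelian group `H = Aut_R(R')`, and is étale since `f` is separable mod the maximal ideal).
Choose prime factorizations `π = ∏ πᵢ` and `δ = ∏ δⱼ` in the UFD `R'` such that the sets
`{πᵢ}` and `{δⱼ}` each form a single `H`-orbit.  Then:
* every maximal ideal of `R'` contains exactly one `πᵢ` and exactly one `δⱼ`;
* the stabilizer `H_M` of a maximal ideal is contained in `H_π ∩ H_δ` (the stabilizers of
  the primes over `(π)` and `(δ)`);
* for each pair `(i,j)`, the ideal `(πᵢ, δⱼ)R'` is either all of `R'` or is the intersection
  of the set of maximal ideals of `R'` containing it, and this set forms a single (uniquely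
  determined) `H_π ∩ H_δ` orbit. -/
theorem adjoin_root_of_unity_over_2dim_regular_local
    (R : Type) [CommRing R] [IsDomain R] [IsLocalRing R] [IsNoetherianRing R]
    (hdim : ringKrullDim R = 2)
    (π δ : R) (hparams : Ideal.span {π, δ} = maximalIdeal R)
    (hπ2 : π ∉ maximalIdeal R ^ 2) (hδ2 : δ ∉ maximalIdeal R ^ 2)
    (K : Type) [Field K] [Algebra R K] [IsFractionRing R K]
    (p m : ℕ) [CharP (ResidueField R) p] (hm : Nat.Coprime m p) (hm0 : 0 < m)
    -- `f` is the (monic) minimal polynomial over `K` of a primitive `m`-th root of unity,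
    -- with coefficients in `R`, and `R' = R[x]/(f)` is étale over `R`
    (f : Polynomial R) (hmonic : f.Monic)
    (hirr : Irreducible (f.map (algebraMap R K)))
    (hroot : IsPrimitiveRoot (AdjoinRoot.root f) m)
    (hsep : (f.map (residue R)).Separable)
    -- prime factorizations of `π` and `δ` in `R'`, each a single `H`-orbit
    (ι κ : Type) [Fintype ι] [Fintype κ]
    (πs : ι → AdjoinRoot f) (δs : κ → AdjoinRoot f)
    (hπfac : algebraMap R (AdjoinRoot f) π = ∏ i, πs i)
    (hδfac : algebraMap R (AdjoinRoot f) δ = ∏ j, δs j)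
    (hπprime : ∀ i, Prime (πs i)) (hδprime : ∀ j, Prime (δs j))
    (hπorb : ∀ i i', ∃ h : AdjoinRoot f ≃ₐ[R] AdjoinRoot f, h (πs i) = πs i')
    (hδorb : ∀ j j', ∃ h : AdjoinRoot f ≃ₐ[R] AdjoinRoot f, h (δs j) = δs j') :
    -- every maximal ideal of `R'` contains exactly one `πᵢ` and one `δⱼ`
    (∀ M : Ideal (AdjoinRoot f), M.IsMaximal → (∃! i, πs i ∈ M) ∧ (∃! j, δs j ∈ M)) ∧
    -- `H_M ⊆ H_π ∩ H_δ`
    (∀ M : Ideal (AdjoinRoot f), M.IsMaximal →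
      ∀ h : AdjoinRoot f ≃ₐ[R] AdjoinRoot f, Ideal.map h M = M →
        (∀ i, Ideal.map h (Ideal.span {πs i}) = Ideal.span {πs i}) ∧
        (∀ j, Ideal.map h (Ideal.span {δs j}) = Ideal.span {δs j})) ∧
    -- `(πᵢ, δⱼ)R'` is `R'` or the intersection of the maximal ideals containing it, which
    -- form a single (uniquely determined) `H_π ∩ H_δ` orbit
    (∀ i j, Ideal.span {πs i, δs j} = ⊤ ∨
      (Ideal.span {πs i, δs j}
          = sInf {M : Ideal (AdjoinRoot f) | M.IsMaximal ∧ Ideal.span {πs i, δs j} ≤ M} ∧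
        ∃ M₀ : Ideal (AdjoinRoot f), M₀.IsMaximal ∧ Ideal.span {πs i, δs j} ≤ M₀ ∧
          {M : Ideal (AdjoinRoot f) | M.IsMaximal ∧ Ideal.span {πs i, δs j} ≤ M}
            = {M | ∃ h : AdjoinRoot f ≃ₐ[R] AdjoinRoot f,
                Ideal.map h (Ideal.span {πs i}) = Ideal.span {πs i} ∧
                Ideal.map h (Ideal.span {δs j}) = Ideal.span {δs j} ∧
                M = Ideal.map h M₀})) :=
  adjoin_root_of_unity_over_2dim_regular_local_general R hdim π δ hparams K m hm0 f hmonic hirr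
    hroot hsep ι κ πs δs hπfac hδfac hπprime hδprime hπorb hδorb
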